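/- Let τ ≥ 0 and let ξ be a real random variable with E ξ = 0 and Var ξ = σ² whose distribution belongs to the class A₁(τ). Then for every real h with |h|τ < 1, one has log E exp(hξ) = (σ²h²/2)(1 + θ|h|τ/3) for some real θ with |θ| ≤ 1; in particular |log E exp(hξ) − σ²h²/2| ≤ σ²h²|h|τ/6. -/

import Mathlib

open MeasureTheory ProbabilityTheory

noncomputable section

/-- `φ` is the cumulant generating function (analytic logarithm of the Laplace transform,
normalized by `φ 0 = 0`) of `μ` on the disc `{z : ‖z‖ * τ < 1}`, with third derivative
bounded by `τ · Var μ`.  This is the defining property of the class `A₁(τ)`. -/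
def IsCGF (φ : ℂ → ℂ) (τ : ℝ) (μ : Measure ℝ) : Prop :=
  φ 0 = 0 ∧ ∀ z : ℂ, ‖z‖ * τ < 1 →
    Integrable (fun x : ℝ => Complex.exp (z * x)) μ ∧
    Complex.exp (φ z) = ∫ x : ℝ, Complex.exp (z * x) ∂μ ∧
    AnalyticAt ℂ φ z ∧
    ‖iteratedDeriv 3 φ z‖ ≤ τ * variance id μ

/-- The class `A₁(τ)` of distributions on `ℝ`. -/
def MemA1 (τ : ℝ) (μ : Measure ℝ) : Prop := ∃ φ : ℂ → ℂ, IsCGF φ τ μ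

/-- `π` is a coupling of `F` and `G`. -/
def IsCoupling (π : Measure (ℝ × ℝ)) (F G : Measure ℝ) : Prop :=
  π.map Prod.fst = F ∧ π.map Prod.snd = G

/-! Near `0`, `exp ∘ φ` is the complex moment generating function `z ↦ E e^{zξ}`; as `φ 0 = 0`,
comparing derivatives at `0` gives `φ' 0 = E ξ = 0` and `φ'' 0 = Var ξ = σ²`. Taylor's formula
of order three along the segment `[0, h]`, with `‖φ'''‖ ≤ τσ²` there, then yields
`‖φ h - σ²h²/2‖ ≤ τσ²|h|³/6`, and for real `h` the real part of `φ h` is `log E e^{hξ}`. -/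

section Taylor

open Set Finset Nat

lemma norm_le_of_hasDerivAt_of_norm_deriv_le_pow {E : Type*} [NormedAddCommGroup E]
    [NormedSpace ℝ E] {g g' : ℝ → E} {C : ℝ} {n : ℕ}
    (hg : ∀ t ∈ Icc (0 : ℝ) 1, HasDerivAt g (g' t) t) (hg0 : g 0 = 0)
    (hg' : ∀ t ∈ Icc (0 : ℝ) 1, ‖g' t‖ ≤ C * t ^ n) :
    ∀ t ∈ Icc (0 : ℝ) 1, ‖g t‖ ≤ C * t ^ (n + 1) / (n + 1) := by
  have hB (t : ℝ) : HasDerivAt (fun t : ℝ => C * t ^ (n + 1) / (n + 1)) (C * t ^ n) t := by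
    refine (((hasDerivAt_pow (n + 1) t).const_mul C).div_const _).congr_deriv ?_
    push_cast
    field_simp
  refine image_norm_le_of_norm_deriv_right_le_deriv_boundary
    (fun t ht => (hg t ht).continuousAt.continuousWithinAt)
    (fun t ht => (hg t (Ico_subset_Icc_self ht)).hasDerivWithinAt) (by simp [hg0]) hB
    (fun t ht => hg' t (Ico_subset_Icc_self ht))

variable {E : Type*} [NormedAddCommGroup E] [NormedSpace ℂ E]

def taylorAtZero (f : ℂ → E) (n : ℕ) (w : ℂ) : E :=
  ∑ k ∈ range n, (w ^ k / k !) • iteratedDeriv k f 0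

lemma hasDerivAt_pow_div_factorial (k : ℕ) (w : ℂ) :
    HasDerivAt (fun w : ℂ => w ^ (k + 1) / (k + 1)!) (w ^ k / k !) w := by
  refine ((hasDerivAt_pow (k + 1) w).div_const _).congr_deriv ?_
  rw [factorial_succ]
  push_cast
  field_simp

lemma hasDerivAt_taylorAtZero_succ (f : ℂ → E) (n : ℕ) (w : ℂ) :
    HasDerivAt (taylorAtZero f (n + 1)) (taylorAtZero (deriv f) n w) w := by
  have hsum := HasDerivAt.fun_sum (u := range n) (fun k _ =>
    (hasDerivAt_pow_div_factorial k w).smul_const (iteratedDeriv (k + 1) f 0))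
  unfold taylorAtZero
  simp only [sum_range_succ' _ n, pow_zero, factorial_zero, cast_one, div_one, one_smul,
    ← iteratedDeriv_succ']
  exact hsum.add_const _

lemma taylorAtZero_succ_zero (f : ℂ → E) (n : ℕ) : taylorAtZero f (n + 1) 0 = f 0 := by
  simp [taylorAtZero, sum_range_succ']

theorem norm_sub_taylorAtZero_le {f : ℂ → E} {z : ℂ} {C : ℝ} (n : ℕ)
    (hf : ∀ k < n, ∀ t ∈ Icc (0 : ℝ) 1, DifferentiableAt ℂ (iteratedDeriv k f) (t * z))
    (hC : ∀ t ∈ Icc (0 : ℝ) 1, ‖iteratedDeriv n f (t * z)‖ ≤ C) :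
    ∀ t ∈ Icc (0 : ℝ) 1, ‖f (t * z) - taylorAtZero f n (t * z)‖ ≤ C * (t * ‖z‖) ^ n / n ! := by
  induction n generalizing f with
  | zero => simpa [taylorAtZero] using hC
  | succ n ih =>
    have hf' : ∀ k < n, ∀ t ∈ Icc (0 : ℝ) 1,
        DifferentiableAt ℂ (iteratedDeriv k (deriv f)) (t * z) := fun k hk => by
      simpa only [← iteratedDeriv_succ'] using hf (k + 1) (by omega)
    have ih' := ih hf' (by simpa only [← iteratedDeriv_succ'] using hC)
    have hderiv (t : ℝ) (ht : t ∈ Icc (0 : ℝ) 1) : HasDerivAt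
        (fun s : ℝ => f (s * z) - taylorAtZero f (n + 1) (s * z))
        (z • (deriv f (t * z) - taylorAtZero (deriv f) n (t * z))) t := by
      have hF := ((iteratedDeriv_zero (f := f) ▸ hf 0 (by omega) t ht).hasDerivAt.sub
        (hasDerivAt_taylorAtZero_succ f n (t * z)))
      have hline : HasDerivAt (fun s : ℝ => (s : ℂ) * z) z t := by
        simpa using (Complex.ofRealCLM.hasDerivAt (x := t)).mul_const z
      exact hF.scomp t hline
    have hbound (t : ℝ) (ht : t ∈ Icc (0 : ℝ) 1) :
        ‖z • (deriv f (t * z) - taylorAtZero (deriv f) n (t * z))‖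
          ≤ C * ‖z‖ ^ (n + 1) / n ! * t ^ n := by
      rw [norm_smul]
      calc ‖z‖ * ‖deriv f (t * z) - taylorAtZero (deriv f) n (t * z)‖
          ≤ ‖z‖ * (C * (t * ‖z‖) ^ n / n !) := by gcongr; exact ih' t ht
        _ = C * ‖z‖ ^ (n + 1) / n ! * t ^ n := by ring
    intro t ht
    refine (norm_le_of_hasDerivAt_of_norm_deriv_le_pow hderiv
      (by simp [taylorAtZero_succ_zero]) hbound t ht).trans_eq ?_
    rw [factorial_succ]
    push_cast
    field_simp
    ring

end Taylor

open Complex Filter Topology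

lemma iteratedDeriv_two_cexp_comp {f : ℂ → ℂ} {z : ℂ} (hf : AnalyticAt ℂ f z) :
    iteratedDeriv 2 (fun w => cexp (f w)) z =
      cexp (f z) * (deriv f z ^ 2 + iteratedDeriv 2 f z) := by
  have hnear : deriv (fun w => cexp (f w)) =ᶠ[𝓝 z] fun w => cexp (f w) * deriv f w :=
    hf.eventually_analyticAt.mono fun w hw => deriv_cexp hw.differentiableAt
  have hprod := (hf.differentiableAt.hasDerivAt.cexp).mul hf.deriv.differentiableAt.hasDerivAt
  rw [iteratedDeriv_succ, iteratedDeriv_one, hnear.deriv_eq]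
  rw [show (fun w => cexp (f w) * deriv f w) = (fun w => cexp (f w)) * deriv f from rfl,
    hprod.deriv, iteratedDeriv_succ, iteratedDeriv_one]
  ring

section CumulantsAtZero

variable {Ω : Type*} {mΩ : MeasurableSpace Ω} {X : Ω → ℝ} {μ : Measure Ω}

lemma iteratedDeriv_complexMGF_zero (h : 0 ∈ interior (integrableExpSet X μ)) (n : ℕ) :
    iteratedDeriv n (complexMGF X μ) 0 = ((∫ ω, X ω ^ n ∂μ : ℝ) : ℂ) := by
  rw [iteratedDeriv_complexMGF (by simpa using h) n, ← integral_complex_ofReal]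
  simp

lemma deriv_zero_of_cexp_eq_complexMGF {φ : ℂ → ℂ} (hX : 0 ∈ interior (integrableExpSet X μ))
    (hφ : AnalyticAt ℂ φ 0) (hφ0 : φ 0 = 0)
    (hexp : (fun z => cexp (φ z)) =ᶠ[𝓝 0] complexMGF X μ) :
    deriv φ 0 = ((∫ ω, X ω ∂μ : ℝ) : ℂ) := by
  have h := hexp.deriv_eq
  rw [deriv_cexp hφ.differentiableAt, hφ0, exp_zero, one_mul,
    ← iteratedDeriv_one (f := complexMGF X μ), iteratedDeriv_complexMGF_zero hX] at h
  simpa using h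

lemma iteratedDeriv_two_zero_of_cexp_eq_complexMGF [IsProbabilityMeasure μ] {φ : ℂ → ℂ}
    (hX : 0 ∈ interior (integrableExpSet X μ)) (hφ : AnalyticAt ℂ φ 0) (hφ0 : φ 0 = 0)
    (hexp : (fun z => cexp (φ z)) =ᶠ[𝓝 0] complexMGF X μ) :
    iteratedDeriv 2 φ 0 = ((Var[X; μ] : ℝ) : ℂ) := by
  have h := hexp.iteratedDeriv_eq 2
  rw [iteratedDeriv_two_cexp_comp hφ, hφ0, exp_zero, one_mul,
    deriv_zero_of_cexp_eq_complexMGF hX hφ hφ0 hexp, iteratedDeriv_complexMGF_zero hX] at h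
  rw [variance_eq_sub (memLp_of_mem_interior_integrableExpSet hX 2)]
  push_cast
  linear_combination h

end CumulantsAtZero

lemma re_eq_log_of_cexp_eq_ofReal {w : ℂ} {r : ℝ} (h : cexp w = r) : w.re = Real.log r := by
  have habs := congrArg norm h
  rw [norm_exp, norm_real, Real.norm_eq_abs] at habs
  rw [← Real.log_abs, ← habs, Real.log_exp]

lemma exists_abs_le_one_eq_mul_one_add {a b ε : ℝ} (h : |a - b| ≤ b * ε) :
    ∃ θ : ℝ, |θ| ≤ 1 ∧ a = b * (1 + θ * ε) := by
  rcases eq_or_ne (b * ε) 0 with hbε | hbε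
  · refine ⟨0, by simp, ?_⟩
    have : a - b = 0 := abs_nonpos_iff.mp (hbε ▸ h)
    linarith
  · have hpos : 0 < b * ε := lt_of_le_of_ne ((abs_nonneg _).trans h) hbε.symm
    refine ⟨(a - b) / (b * ε), ?_, ?_⟩
    · rwa [abs_div, abs_of_pos hpos, div_le_one hpos]
    · calc a = b + (a - b) / (b * ε) * (b * ε) := by rw [div_mul_cancel₀ _ hbε]; ring
        _ = b * (1 + (a - b) / (b * ε) * ε) := by ring

namespace IsCGF

variable {φ : ℂ → ℂ} {τ : ℝ} {μ : Measure ℝ}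

lemma zero_mem_interior_integrableExpSet (hφ : IsCGF φ τ μ) :
    0 ∈ interior (integrableExpSet id μ) := by
  refine mem_interior_iff_mem_nhds.mpr (Filter.mem_of_superset ((isOpen_lt (by fun_prop)
    continuous_const).mem_nhds (by simp : (0 : ℝ) ∈ {t : ℝ | |t| * τ < 1})) fun t ht => ?_)
  refine ((hφ.2 t (by simpa using ht)).1.norm).congr (Filter.Eventually.of_forall fun x => ?_)
  simp [← ofReal_mul, norm_exp]

lemma cexp_eventuallyEq_complexMGF (hφ : IsCGF φ τ μ) :
    (fun z => cexp (φ z)) =ᶠ[𝓝 0] complexMGF id μ := by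
  refine Filter.eventually_of_mem ((isOpen_lt (by fun_prop) continuous_const).mem_nhds
    (by simp : (0 : ℂ) ∈ {z : ℂ | ‖z‖ * τ < 1})) fun z hz => (hφ.2 z hz).2.1

theorem norm_sub_variance_mul_sq_le [IsProbabilityMeasure μ] (hφ : IsCGF φ τ μ)
    (hmean : ∫ x, x ∂μ = 0) {z : ℂ} (hz : ‖z‖ * τ < 1) :
    ‖φ z - Var[id; μ] * z ^ 2 / 2‖ ≤ τ * Var[id; μ] * ‖z‖ ^ 3 / 6 := by
  have hX := hφ.zero_mem_interior_integrableExpSet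
  have hφ0 : AnalyticAt ℂ φ 0 := (hφ.2 0 (by simp)).2.2.1
  have hd1 := deriv_zero_of_cexp_eq_complexMGF hX hφ0 hφ.1 hφ.cexp_eventuallyEq_complexMGF
  have hd2 :=
    iteratedDeriv_two_zero_of_cexp_eq_complexMGF hX hφ0 hφ.1 hφ.cexp_eventuallyEq_complexMGF
  have hseg (t : ℝ) (ht : t ∈ Set.Icc (0 : ℝ) 1) : ‖(t : ℂ) * z‖ * τ < 1 := by
    rw [norm_mul, norm_real, Real.norm_of_nonneg ht.1, mul_assoc]
    rcases le_total (‖z‖ * τ) 0 with hneg | hnonneg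
    · nlinarith [ht.1]
    · nlinarith [ht.2]
  have htaylor := norm_sub_taylorAtZero_le 3
    (fun k _ t ht => (iteratedDeriv_eq_iterate (f := φ) ▸
      ((hφ.2 _ (hseg t ht)).2.2.1.iterated_deriv k)).differentiableAt)
    (fun t ht => (hφ.2 _ (hseg t ht)).2.2.2) 1 (by simp)
  have hpoly : taylorAtZero φ 3 z = Var[id; μ] * z ^ 2 / 2 := by
    simp only [taylorAtZero, Finset.sum_range_succ, Finset.sum_range_zero, iteratedDeriv_zero,
      iteratedDeriv_one, hφ.1, hd1, hd2, id_eq, hmean, smul_eq_mul, Nat.factorial, ofReal_zero]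
    push_cast
    ring
  simpa [hpoly, Nat.factorial] using htaylor

end IsCGF

theorem log_mgf_expansion_A1_general
    (τ σ : ℝ) (F : Measure ℝ) [IsProbabilityMeasure F]
    (hmean : (∫ x : ℝ, x ∂F) = 0) (hvar : variance id F = σ ^ 2) (hA : MemA1 τ F)
    (h : ℝ) (hh : |h| * τ < 1) :
    ∃ θ : ℝ, |θ| ≤ 1 ∧
      Real.log (∫ x : ℝ, Real.exp (h * x) ∂F) =
        σ ^ 2 * h ^ 2 / 2 * (1 + θ * |h| * τ / 3) := by
  obtain ⟨φ, hφ⟩ := hA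
  have hhτ : ‖(h : ℂ)‖ * τ < 1 := by simpa using hh
  have hre : (φ h).re = Real.log (∫ x : ℝ, Real.exp (h * x) ∂F) :=
    re_eq_log_of_cexp_eq_ofReal ((hφ.2 h hhτ).2.1.trans (complexMGF_ofReal (X := id) h))
  have hbound : |Real.log (∫ x : ℝ, Real.exp (h * x) ∂F) - σ ^ 2 * h ^ 2 / 2|
      ≤ σ ^ 2 * h ^ 2 / 2 * (|h| * τ / 3) := by
    have hnorm := hφ.norm_sub_variance_mul_sq_le hmean hhτ
    rw [hvar, show ((σ ^ 2 : ℝ) : ℂ) * (h : ℂ) ^ 2 / 2 = ((σ ^ 2 * h ^ 2 / 2 : ℝ) : ℂ) by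
      push_cast; ring] at hnorm
    have hcube : |h| ^ 3 = h ^ 2 * |h| := by rw [pow_succ, sq_abs]
    calc _ = |(φ h - ((σ ^ 2 * h ^ 2 / 2 : ℝ) : ℂ)).re| := by rw [sub_re, ofReal_re, hre]
      _ ≤ ‖φ h - ((σ ^ 2 * h ^ 2 / 2 : ℝ) : ℂ)‖ := abs_re_le_norm _
      _ ≤ τ * σ ^ 2 * |h| ^ 3 / 6 := by simpa using hnorm
      _ = σ ^ 2 * h ^ 2 / 2 * (|h| * τ / 3) := by rw [hcube]; ring
  obtain ⟨θ, hθ, hlog⟩ := exists_abs_le_one_eq_mul_one_add hbound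
  exact ⟨θ, hθ, hlog.trans (by ring)⟩

/-- Expansion of the log-Laplace transform on the class `A₁(τ)`: for `|h| τ < 1`,
`log E e^{hξ} = (σ²h²/2)(1 + θ|h|τ/3)` with `|θ| ≤ 1`. -/
theorem log_mgf_expansion_A1
    (τ σ : ℝ) (hτ : 0 ≤ τ) (F : Measure ℝ) [IsProbabilityMeasure F]
    (hmean : (∫ x : ℝ, x ∂F) = 0) (hvar : variance id F = σ ^ 2) (hA : MemA1 τ F)
    (h : ℝ) (hh : |h| * τ < 1) :
    ∃ θ : ℝ, |θ| ≤ 1 ∧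
      Real.log (∫ x : ℝ, Real.exp (h * x) ∂F) =
        σ ^ 2 * h ^ 2 / 2 * (1 + θ * |h| * τ / 3) :=
  log_mgf_expansion_A1_general τ σ F hmean hvar hA h hh
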